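/- Let H := Hhull(S, G[V∖Pa↔(S)]). A set A ⊆ V∖S is a minimum-cost hedge-hitting set for Q[S] in G if and only if Pa↔(S) ⊆ A and A∖Pa↔(S) minimizes cost among all subsets of V∖(S ∪ Pa↔(S)) that intersect every hedge formed for Q[S] in G[H]. -/

import Mathlib

/-- A semi-Markovian graph on vertex type `V`: a DAG of directed edges together with a
symmetric irreflexive relation of bidirected edges. `dir x y` means there is a directed
edge from `x` to `y`, i.e. `x` is a parent of `y`. -/
structure SemiMarkovian (V : Type*) where
  dir : V → V → Prop
  bid : V → V → Prop
  bid_symm : ∀ x y, bid x y → bid y x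
  bid_irrefl : ∀ x, ¬ bid x x
  acyclic : ∀ x, ¬ Relation.TransGen dir x x

namespace SemiMarkovian

variable {V : Type*}

/-- The induced subgraph of `G` on the vertex set `W`. -/
def induce (G : SemiMarkovian V) (W : Set V) : SemiMarkovian V where
  dir a b := a ∈ W ∧ b ∈ W ∧ G.dir a b
  bid a b := a ∈ W ∧ b ∈ W ∧ G.bid a b
  bid_symm := fun x y h => ⟨h.2.1, h.1, G.bid_symm x y h.2.2⟩
  bid_irrefl := fun x h => G.bid_irrefl x h.2.2
  acyclic := fun x h =>
    G.acyclic x (by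
      have key : ∀ a b, Relation.TransGen (fun a b => a ∈ W ∧ b ∈ W ∧ G.dir a b) a b →
          Relation.TransGen G.dir a b := by
        intro a b hab
        induction hab with
        | single hab => exact Relation.TransGen.single hab.2.2
        | tail _ hab ih => exact Relation.TransGen.tail ih hab.2.2
      exact key x x h)

/-- There is a directed path (possibly of length zero) from `x` to `y` all of whose
vertices lie in `F`. -/
def DirPathIn (G : SemiMarkovian V) (F : Set V) (x y : V) : Prop :=
  x ∈ F ∧ Relation.ReflTransGen (fun a b => b ∈ F ∧ G.dir a b) x y

/-- `x` and `y` are joined by a path of bidirected edges all of whose vertices lie in `F`. -/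
def BidConnIn (G : SemiMarkovian V) (F : Set V) (x y : V) : Prop :=
  x ∈ F ∧ Relation.ReflTransGen (fun a b => b ∈ F ∧ G.bid a b) x y

/-- `x` is an ancestor of the set `S` in `G[F]`. -/
def AncestorIn (G : SemiMarkovian V) (F S : Set V) (x : V) : Prop :=
  ∃ s ∈ S, G.DirPathIn F x s

/-- `G[F]` is a c-component: any two vertices of `F` are joined by a path of bidirected
edges all of whose vertices lie in `F`. -/
def CComponent (G : SemiMarkovian V) (F : Set V) : Prop :=
  ∀ x ∈ F, ∀ y ∈ F, G.BidConnIn F x y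

/-- `F` is a hedge formed for `Q[S]` in `G`: `S ⊊ F`, every vertex of `F` is an ancestor of
`S` in `G[F]`, and `G[F]` is a c-component. -/
def IsHedge (G : SemiMarkovian V) (S F : Set V) : Prop :=
  S ⊂ F ∧ (∀ x ∈ F, G.AncestorIn F S x) ∧ G.CComponent F

/-- The hedge hull of `S` in `G`: the union of `S` with all hedges formed for `Q[S]` in `G`. -/
def Hhull (G : SemiMarkovian V) (S : Set V) : Set V :=
  S ∪ ⋃₀ {F | G.IsHedge S F}

/-- Vertices outside `S` that are parents of some vertex of `S`. -/
def Pa (G : SemiMarkovian V) (S : Set V) : Set V :=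
  {x | x ∉ S ∧ ∃ s ∈ S, G.dir x s}

/-- Vertices outside `S` that have a bidirected edge to some vertex of `S`. -/
def Bid (G : SemiMarkovian V) (S : Set V) : Set V :=
  {x | x ∉ S ∧ ∃ s ∈ S, G.bid x s}

/-- `Pa↔(S) := Pa(S) ∩ Bid(S)`. -/
def PaBid (G : SemiMarkovian V) (S : Set V) : Set V := G.Pa S ∩ G.Bid S

/-! ### Auxiliary lemmas -/

private lemma rtg_of_rtg {F : Set V} {r r' : V → V → Prop}
    (h : ∀ a b, a ∈ F → b ∈ F → r a b → r' a b) {x y : V} (hx : x ∈ F)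
    (hp : Relation.ReflTransGen (fun a b => b ∈ F ∧ r a b) x y) :
    Relation.ReflTransGen (fun a b => b ∈ F ∧ r' a b) x y ∧ y ∈ F := by
  induction hp with
  | refl => exact ⟨.refl, hx⟩
  | tail p e ih => exact ⟨ih.1.tail ⟨e.1, h _ _ ih.2 e.1 e.2⟩, e.1⟩

/-- A hedge in an induced subgraph is a hedge in the whole graph, provided it lies in the
induced vertex set; and conversely. -/
lemma isHedge_induce_iff (G : SemiMarkovian V) {S F W : Set V} (hFW : F ⊆ W) :
    (G.induce W).IsHedge S F ↔ G.IsHedge S F := by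
  constructor
  · rintro ⟨h1, h2, h3⟩
    refine ⟨h1, fun x hx => ?_, fun x hx y hy => ?_⟩
    · obtain ⟨s, hs, hxF, hp⟩ := h2 x hx
      exact ⟨s, hs, hxF, (rtg_of_rtg (fun a b _ _ hd => hd.2.2) hxF hp).1⟩
    · obtain ⟨hxF, hp⟩ := h3 x hx y hy
      exact ⟨hxF, (rtg_of_rtg (fun a b _ _ hd => hd.2.2) hxF hp).1⟩
  · rintro ⟨h1, h2, h3⟩
    refine ⟨h1, fun x hx => ?_, fun x hx y hy => ?_⟩
    · obtain ⟨s, hs, hxF, hp⟩ := h2 x hx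
      exact ⟨s, hs, hxF,
        (rtg_of_rtg (fun a b ha hb hd => ⟨hFW ha, hFW hb, hd⟩) hxF hp).1⟩
    · obtain ⟨hxF, hp⟩ := h3 x hx y hy
      exact ⟨hxF, (rtg_of_rtg (fun a b ha hb hd => ⟨hFW ha, hFW hb, hd⟩) hxF hp).1⟩

/-- A hedge in an induced subgraph lies in the induced vertex set (if `S` does). -/
lemma isHedge_induce_subset (G : SemiMarkovian V) {S F W : Set V} (hSW : S ⊆ W)
    (h : (G.induce W).IsHedge S F) : F ⊆ W := by
  intro x hx
  obtain ⟨s, hs, hxF, hp⟩ := h.2.1 x hx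
  rcases hp.cases_head with heq | ⟨c, ⟨_, hxW, _, _⟩, _⟩
  · exact heq ▸ hSW hs
  · exact hxW

lemma paBid_subset_compl (G : SemiMarkovian V) (S : Set V) : G.PaBid S ⊆ Sᶜ :=
  fun _ hx => hx.1.1

/-- For `p ∈ Pa↔(S)`, the set `S ∪ {p}` is a hedge formed for `Q[S]` in `G`. -/
lemma isHedge_insert_paBid (G : SemiMarkovian V) {S : Set V} (hS : G.CComponent S)
    {p : V} (hp : p ∈ G.PaBid S) : G.IsHedge S (S ∪ {p}) := by
  obtain ⟨⟨hpS, s1, hs1, hdir⟩, _, s2, hs2, hbid⟩ := hp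
  set F : Set V := S ∪ {p} with hF
  have hpF : p ∈ F := Or.inr rfl
  have lift : ∀ x ∈ S, ∀ y ∈ S,
      Relation.ReflTransGen (fun a b => b ∈ F ∧ G.bid a b) x y := fun x hx y hy =>
    Relation.ReflTransGen.mono (fun a b (h : b ∈ S ∧ G.bid a b) => (⟨Or.inl h.1, h.2⟩ : b ∈ F ∧ G.bid a b)) x y (hS x hx y hy).2
  refine ⟨(Set.ssubset_iff_of_subset Set.subset_union_left).mpr ⟨p, hpF, hpS⟩,
    fun x hx => ?_, fun x hx y hy => ?_⟩
  · rcases hx with hx | rfl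
    · exact ⟨x, hx, Or.inl hx, .refl⟩
    · exact ⟨s1, hs1, hpF, .single ⟨Or.inl hs1, hdir⟩⟩
  · rcases hx with hx | rfl <;> rcases hy with hy | rfl
    · exact ⟨Or.inl hx, lift x hx y hy⟩
    · exact ⟨Or.inl hx, (lift x hx s2 hs2).tail ⟨hpF, G.bid_symm _ s2 hbid⟩⟩
    · exact ⟨hpF, Relation.ReflTransGen.head ⟨Or.inl hs2, hbid⟩ (lift s2 hs2 y hy)⟩
    · exact ⟨hpF, .refl⟩

/-- The hedges of `G[H]` (for `H` the hedge hull of `S` in `G[Pa↔(S)ᶜ]`) are exactly the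
hedges of `G` avoiding `Pa↔(S)`. -/
lemma isHedge_induce_hull_iff (G : SemiMarkovian V) {S H : Set V}
    (hH : H = (G.induce (G.PaBid S)ᶜ).Hhull S) (F : Set V) :
    (G.induce H).IsHedge S F ↔ G.IsHedge S F ∧ F ⊆ (G.PaBid S)ᶜ := by
  have hSP : S ⊆ (G.PaBid S)ᶜ := fun x hx hmem => hmem.1.1 hx
  have hSH : S ⊆ H := hH ▸ fun x hx => Or.inl hx
  have hHP : H ⊆ (G.PaBid S)ᶜ := by
    rw [hH]
    rintro x (hx | ⟨F', hF', hxF'⟩)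
    · exact hSP hx
    · exact isHedge_induce_subset G hSP hF' hxF'
  constructor
  · intro h
    have hFH : F ⊆ H := isHedge_induce_subset G hSH h
    exact ⟨(isHedge_induce_iff G hFH).mp h, hFH.trans hHP⟩
  · rintro ⟨hG, hFP⟩
    have hF' : (G.induce (G.PaBid S)ᶜ).IsHedge S F := (isHedge_induce_iff G hFP).mpr hG
    have hFH : F ⊆ H := hH ▸ fun x hx => Or.inr ⟨F, hF', hx⟩
    exact (isHedge_induce_iff G hFH).mpr hG

end SemiMarkovian
/-- With `H := Hhull(S, G[V∖Pa↔(S)])`, a set `A ⊆ V∖S` is a minimum-cost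
hedge-hitting set for `Q[S]` in `G` iff `Pa↔(S) ⊆ A` and `A∖Pa↔(S)` minimizes cost among
all subsets of `V∖(S ∪ Pa↔(S))` intersecting every hedge formed for `Q[S]` in `G[H]`. -/
theorem minCost_iff_paBid_and_reduced {V : Type*} [Fintype V] (G : SemiMarkovian V)
    (S : Set V) (hS : G.CComponent S) (C : V → NNReal) (H : Set V)
    (hH : H = (G.induce (G.PaBid S)ᶜ).Hhull S) (A : Set V) (hA : A ⊆ Sᶜ) :
    ((∀ F, G.IsHedge S F → (A ∩ F).Nonempty) ∧
      ∀ A' : Set V, A' ⊆ Sᶜ → (∀ F, G.IsHedge S F → (A' ∩ F).Nonempty) →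
        ∑ᶠ a ∈ A, C a ≤ ∑ᶠ a ∈ A', C a) ↔
    (G.PaBid S ⊆ A ∧
      (∀ F, (G.induce H).IsHedge S F → ((A \ G.PaBid S) ∩ F).Nonempty) ∧
      ∀ B : Set V, B ⊆ (S ∪ G.PaBid S)ᶜ →
        (∀ F, (G.induce H).IsHedge S F → (B ∩ F).Nonempty) →
        ∑ᶠ a ∈ A \ G.PaBid S, C a ≤ ∑ᶠ a ∈ B, C a) := by
  set P := G.PaBid S with hP
  have hPS : P ⊆ Sᶜ := SemiMarkovian.paBid_subset_compl G S
  have hsum : ∀ X : Set V, P ⊆ X →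
      ∑ᶠ a ∈ X, C a = ∑ᶠ a ∈ X \ P, C a + ∑ᶠ a ∈ P, C a := by
    intro X hX
    rw [← finsum_mem_union Set.disjoint_sdiff_left (Set.toFinite _) (Set.toFinite _),
      Set.diff_union_of_subset hX]
  -- a set hitting all hedges of `G` and avoiding `S` must contain `P`
  have hPsub : ∀ X : Set V, X ⊆ Sᶜ → (∀ F, G.IsHedge S F → (X ∩ F).Nonempty) → P ⊆ X := by
    intro X hXS hhit p hp
    obtain ⟨a, haX, haF⟩ := hhit _ (SemiMarkovian.isHedge_insert_paBid G hS hp)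
    rcases haF with haS | rfl
    · exact absurd haS (hXS haX)
    · exact haX
  -- hitting all hedges of `G` iff containing `P` and hitting all hedges of `G[H]`
  have hhit_iff : ∀ X : Set V, P ⊆ X →
      ((∀ F, G.IsHedge S F → (X ∩ F).Nonempty) ↔
        (∀ F, (G.induce H).IsHedge S F → ((X \ P) ∩ F).Nonempty)) := by
    intro X hPX
    constructor
    · intro hhit F hF
      obtain ⟨hGF, hFP⟩ := (SemiMarkovian.isHedge_induce_hull_iff G hH F).mp hF
      obtain ⟨a, haX, haF⟩ := hhit F hGF
      exact ⟨a, ⟨haX, fun hmem => hFP haF hmem⟩, haF⟩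
    · intro hhit F hF
      by_cases hFP : F ⊆ Pᶜ
      · obtain ⟨a, haX, haF⟩ :=
          hhit F ((SemiMarkovian.isHedge_induce_hull_iff G hH F).mpr ⟨hF, hFP⟩)
        exact ⟨a, haX.1, haF⟩
      · obtain ⟨p, hpF, hpP⟩ := Set.not_subset.mp hFP
        exact ⟨p, hPX (not_not.mp hpP), hpF⟩
  constructor
  · rintro ⟨hhit, hmin⟩
    have hPA : P ⊆ A := hPsub A hA hhit
    refine ⟨hPA, (hhit_iff A hPA).mp hhit, fun B hB hBhit => ?_⟩
    have hBS : B ∪ P ⊆ Sᶜ :=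
      Set.union_subset (fun x hx hxS => hB hx (Or.inl hxS)) hPS
    have hBP : (B ∪ P) \ P = B := by
      rw [Set.union_diff_right]
      exact (Set.disjoint_left.mpr fun x hx hxP => hB hx (Or.inr hxP)).sdiff_eq_left
    have hhitB : ∀ F, G.IsHedge S F → ((B ∪ P) ∩ F).Nonempty := by
      refine (hhit_iff (B ∪ P) Set.subset_union_right).mpr ?_
      rw [hBP]; exact hBhit
    have hle := hmin (B ∪ P) hBS hhitB
    rw [hsum A hPA, hsum (B ∪ P) Set.subset_union_right, hBP] at hle
    exact le_of_add_le_add_right hle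
  · rintro ⟨hPA, hhit', hmin'⟩
    have hhit : ∀ F, G.IsHedge S F → (A ∩ F).Nonempty := (hhit_iff A hPA).mpr hhit'
    refine ⟨hhit, fun A' hA' hhitA' => ?_⟩
    have hPA' : P ⊆ A' := hPsub A' hA' hhitA'
    have hsub : A' \ P ⊆ (S ∪ P)ᶜ := by
      rintro x hx (hxS | hxP)
      · exact hA' hx.1 hxS
      · exact hx.2 hxP
    have hle := hmin' (A' \ P) hsub ((hhit_iff A' hPA').mp hhitA')
    rw [hsum A hPA, hsum A' hPA']
    exact add_le_add_left hle _
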